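/- Let ξ_β (β ∈ ℕ^m, |β| ≤ d) be independent standard Gaussian vectors γ_β ∼ N(0, 1_k), and define X̃_d(u) = Σ_{|β|≤d} binom(d,β)^{1/2} γ_β (u/√d)^β and X̃_∞(u) = Σ_β (1/β!)^{1/2} γ_β u^β. Then for each fixed u with |u| ≤ 1, X̃_d(u) → X̃_∞(u) almost surely as d → ∞, since the coefficient binom(d,β)^{1/2} d^{-|β|/2} → (1/β!)^{1/2} for each β and the tails are uniformly summably small. -/

import Mathlib

/-!
Write `X̃_d(u) = ∑_β c_d(|β|) a_β` with `a_β = (1/β!)^{1/2} γ_β u^β` the Bargmann–Fock terms and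
`c_d(j) = (d(d-1)⋯(d-j+1) / d^j)^{1/2}`, which vanishes for `j > d`, lies in `[0, 1]`, and tends
to `1` as `d → ∞`. Since `E ∑_β (1/β!)^{1/2} |γ_β| = E|γ| ∑_β (1/β!)^{1/2} < ∞`, almost surely
`∑_β |a_β| < ∞` for `‖u‖ ≤ 1`, and dominated convergence for series (Tannery's theorem) gives
`X̃_d(u) → X̃_∞(u)`.
-/

open MeasureTheory ProbabilityTheory Finset Filter Topology Asymptotics
open scoped Nat

theorem summable_sqrt_inv_factorial : Summable fun n : ℕ => √(1 / (n ! : ℝ)) := by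
  refine (summable_nat_add_iff 1).mp <| (summable_geometric_of_lt_one (r := 3 / 4)
    (by norm_num) (by norm_num)).of_nonneg_of_le (fun n => Real.sqrt_nonneg _) fun n => ?_
  have hfact : 2 ^ n ≤ (n + 1)! := by
    simpa [add_comm] using Nat.factorial_mul_pow_le_factorial (m := 1) (n := n)
  rw [Real.sqrt_le_iff]
  refine ⟨by positivity, ?_⟩
  calc 1 / ((n + 1)! : ℝ) ≤ 1 / 2 ^ n := one_div_le_one_div_of_le (by positivity) (mod_cast hfact)
    _ = (1 / 2) ^ n := by rw [one_div_pow]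
    _ ≤ ((3 / 4) ^ n) ^ 2 := by
      rw [← pow_mul, mul_comm, pow_mul]
      exact pow_le_pow_left₀ (by norm_num) (by norm_num) n

theorem summable_prod_apply_of_nonneg {ι κ : Type*} [Fintype ι] {a : κ → ℝ} (ha : 0 ≤ a)
    (hs : Summable a) : Summable fun β : ι → κ => ∏ l, a (β l) := by
  classical
  refine summable_of_sum_le (c := (∑' n, a n) ^ Fintype.card ι)
    (fun β => prod_nonneg fun l _ => ha _) fun T => ?_
  calc ∑ β ∈ T, ∏ l, a (β l)
      ≤ ∑ β ∈ Fintype.piFinset fun l => T.image (· l), ∏ l, a (β l) :=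
        sum_le_sum_of_subset_of_nonneg
          (fun β hβ => Fintype.mem_piFinset.2 fun l => mem_image_of_mem _ hβ)
          (fun β _ _ => prod_nonneg fun l _ => ha _)
    _ = ∏ l, ∑ n ∈ T.image (· l), a n := (prod_univ_sum _ fun _ => a).symm
    _ ≤ ∏ _l : ι, ∑' n, a n :=
        prod_le_prod (fun l _ => sum_nonneg fun n _ => ha n)
          fun l _ => hs.sum_le_tsum _ fun n _ => ha n
    _ = (∑' n, a n) ^ Fintype.card ι := prod_const _

theorem summable_sqrt_inv_prod_factorial {ι : Type*} [Fintype ι] :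
    Summable fun β : ι → ℕ => √(1 / ∏ l, ((β l)! : ℝ)) := by
  refine (summable_prod_apply_of_nonneg (fun n => Real.sqrt_nonneg _)
    summable_sqrt_inv_factorial).congr fun β => ?_
  rw [← Real.sqrt_prod _ fun l _ => by positivity, prod_div_distrib, prod_const_one]

theorem ae_summable_norm_mul_of_map_eq {ι Ω : Type*} [Countable ι] [MeasurableSpace Ω]
    {μ : Measure Ω} {ν : Measure ℝ} (hν : MemLp id 1 ν) {X : ι → Ω → ℝ}
    (hX : ∀ i, Measurable (X i)) (hXν : ∀ i, μ.map (X i) = ν) {w : ι → ℝ}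
    (hw : Summable fun i => ‖w i‖) :
    ∀ᵐ ω ∂μ, Summable fun i => ‖w i * X i ω‖ := by
  have hnorm : ∀ i, eLpNorm (fun ω => w i * X i ω) 1 μ = ‖w i‖ₑ * eLpNorm id 1 ν := by
    intro i
    rw [← hXν i, eLpNorm_map_measure aestronglyMeasurable_id (hX i).aemeasurable]
    exact eLpNorm_const_smul (w i) (X i) 1 μ
  refine summable_norm_of_tsum_eLpNorm_ne_top le_rfl
    (fun i => ((hX i).const_mul (w i)).aestronglyMeasurable) ?_
  rw [tsum_congr hnorm, ENNReal.tsum_mul_right]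
  exact ENNReal.mul_ne_top (tsum_enorm_ne_top_iff_summable_norm.2 hw) hν.eLpNorm_lt_top.ne

theorem tendsto_tsum_mul_of_tendsto_one {α ι : Type*} {𝓕 : Filter α} {c : α → ι → ℝ}
    {g : ι → ℝ} (hg : Summable fun i => ‖g i‖) (hc : ∀ n i, ‖c n i‖ ≤ 1)
    (hlim : ∀ i, Tendsto (c · i) 𝓕 (𝓝 1)) :
    Tendsto (fun n => ∑' i, c n i * g i) 𝓕 (𝓝 (∑' i, g i)) :=
  tendsto_tsum_of_dominated_convergence hg
    (fun i => by simpa only [one_mul] using (hlim i).mul_const (g i))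
    (Eventually.of_forall fun n i => by
      rw [norm_mul]
      exact mul_le_of_le_one_left (norm_nonneg _) (hc n i))

theorem sum_range_sum_piAntidiag_eq_tsum {ι : Type*} [Fintype ι] [DecidableEq ι]
    {f : (ι → ℕ) → ℝ} (d : ℕ) (hf : ∀ β, d < ∑ l, β l → f β = 0) :
    ∑ j ∈ range (d + 1), ∑ β ∈ piAntidiag univ j, f β = ∑' β, f β := by
  have hdisj : (range (d + 1) : Set ℕ).PairwiseDisjoint (piAntidiag (univ : Finset ι)) :=
    fun j₁ _ j₂ _ hne => disjoint_left.2 fun β h₁ h₂ =>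
      hne ((mem_piAntidiag.1 h₁).1.symm.trans (mem_piAntidiag.1 h₂).1)
  rw [← sum_biUnion hdisj, tsum_eq_sum fun β hβ => hf β ?_]
  by_contra! hle
  exact hβ (mem_biUnion.2 ⟨_, mem_range.2 (Nat.lt_succ_of_le hle), mem_piAntidiag.2 ⟨rfl, by simp⟩⟩)

/-- The ratio `binom(d,β)^{1/2} d^{-|β|/2} / (1/β!)^{1/2}` of the coefficients of the rescaled
Kostlan and the Bargmann–Fock fields, which depends only on `d` and `j = |β|`. -/
noncomputable def kostlanCoeffRatio (d j : ℕ) : ℝ := √((d.descFactorial j : ℝ) / (d : ℝ) ^ j)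

theorem kostlanCoeffRatio_eq_zero_of_lt {d j : ℕ} (h : d < j) : kostlanCoeffRatio d j = 0 := by
  simp [kostlanCoeffRatio, Nat.descFactorial_eq_zero_iff_lt.2 h]

theorem norm_kostlanCoeffRatio_le_one (d j : ℕ) : ‖kostlanCoeffRatio d j‖ ≤ 1 := by
  rw [kostlanCoeffRatio, Real.norm_of_nonneg (Real.sqrt_nonneg _), Real.sqrt_le_one]
  rcases eq_or_ne d 0 with rfl | hd
  · rcases j with _ | j <;> simp
  exact div_le_one_of_le₀ (mod_cast Nat.descFactorial_le_pow d j) (by positivity)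

theorem tendsto_kostlanCoeffRatio (j : ℕ) :
    Tendsto (kostlanCoeffRatio · j) atTop (𝓝 1) := by
  have hz : ∀ᶠ d : ℕ in atTop, ((d : ℝ) ^ j) ≠ 0 :=
    eventually_atTop.2 ⟨1, fun d hd => pow_ne_zero _ (by positivity)⟩
  have h := ((isEquivalent_iff_tendsto_one hz).1 (isEquivalent_descFactorial j)).sqrt
  rw [Real.sqrt_one] at h
  exact h

theorem sqrt_multinomial_mul_prod_div_sqrt_eq_kostlanCoeffRatio_mul {ι : Type*} [Fintype ι] {d : ℕ} {β : ι → ℕ}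
    (hβ : ∑ l, β l ≤ d) (x : ℝ) (u : ι → ℝ) :
    √((d ! : ℝ) / ((∏ l, ((β l)! : ℝ)) * ((d - ∑ l, β l)! : ℝ))) * x *
        ∏ l, (u l / √d) ^ β l =
      kostlanCoeffRatio d (∑ l, β l) * (√(1 / ∏ l, ((β l)! : ℝ)) * x * ∏ l, u l ^ β l) := by
  set j := ∑ l, β l
  have hfac : (d ! : ℝ) = (d - j)! * d.descFactorial j := mod_cast (Nat.factorial_mul_descFactorial hβ).symm
  have hpow : √(d : ℝ) ^ j = √((d : ℝ) ^ j) := by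
    rw [← Real.sqrt_sq (pow_nonneg (Real.sqrt_nonneg _) j), ← pow_mul, mul_comm, pow_mul,
      Real.sq_sqrt d.cast_nonneg]
  have hprod : ∏ l, (u l / √d) ^ β l = (∏ l, u l ^ β l) / √((d : ℝ) ^ j) := by
    simp_rw [div_pow]
    rw [prod_div_distrib, prod_pow_eq_pow_sum, hpow]
  have hsqrt : √((d ! : ℝ) / ((∏ l, ((β l)! : ℝ)) * ((d - j)! : ℝ))) / √((d : ℝ) ^ j) =
      kostlanCoeffRatio d j * √(1 / ∏ l, ((β l)! : ℝ)) := by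
    rw [kostlanCoeffRatio, ← Real.sqrt_div' _ (by positivity), ← Real.sqrt_mul' _ (by positivity),
      hfac]
    congr 1
    field_simp
  rw [hprod]
  linear_combination (x * ∏ l, u l ^ β l) * hsqrt

theorem stmt_19_general {m k : ℕ} {Ω : Type*} [MeasureSpace Ω]
    (γ : (Fin m → ℕ) → Ω → Fin k → ℝ)
    (hmeas : ∀ β i, Measurable fun ω => γ β ω i)
    (hgauss : ∀ β i, Measure.map (fun ω => γ β ω i) volume = gaussianReal 0 1)
    (Xd : ℕ → (Fin m → ℝ) → Ω → Fin k → ℝ)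
    (hXd : ∀ d u ω i, Xd d u ω i =
      ∑ j ∈ Finset.range (d + 1),
        ∑ β ∈ Finset.piAntidiag (Finset.univ : Finset (Fin m)) j,
          Real.sqrt ((d.factorial : ℝ) /
              ((∏ l, ((β l).factorial : ℝ)) * ((d - j).factorial : ℝ))) *
            γ β ω i * ∏ l, (u l / Real.sqrt d) ^ β l)
    (Xinf : (Fin m → ℝ) → Ω → Fin k → ℝ)
    (hXinf : ∀ u ω i, Xinf u ω i =
      ∑' β : Fin m → ℕ,
        Real.sqrt (1 / ∏ l, ((β l).factorial : ℝ)) * γ β ω i * ∏ l, u l ^ β l)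
    (u : Fin m → ℝ) (hu : ‖u‖ ≤ 1) :
    ∀ᵐ ω ∂(volume : Measure Ω),
      Tendsto (fun d => Xd d u ω) atTop (nhds (Xinf u ω)) := by
  have hsum : ∀ᵐ ω, ∀ i, Summable fun β => ‖√(1 / ∏ l, ((β l)! : ℝ)) * γ β ω i‖ :=
    ae_all_iff.2 fun i => ae_summable_norm_mul_of_map_eq (memLp_id_gaussianReal 1)
      (fun β => hmeas β i) (fun β => hgauss β i) summable_sqrt_inv_prod_factorial.norm
  have hmonomial : ∀ β : Fin m → ℕ, ‖∏ l, u l ^ β l‖ ≤ 1 := fun β => by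
    rw [norm_prod]
    exact prod_le_one (fun _ _ => norm_nonneg _) fun l _ => by
      rw [norm_pow]; exact pow_le_one₀ (norm_nonneg _) ((norm_le_pi_norm u l).trans hu)
  filter_upwards [hsum] with ω hω
  refine tendsto_pi_nhds.2 fun i => ?_
  have hXd' : ∀ d, Xd d u ω i = ∑' β, kostlanCoeffRatio d (∑ l, β l) *
      (√(1 / ∏ l, ((β l)! : ℝ)) * γ β ω i * ∏ l, u l ^ β l) := fun d => by
    rw [hXd, ← sum_range_sum_piAntidiag_eq_tsum d fun β hβ => by
      rw [kostlanCoeffRatio_eq_zero_of_lt hβ, zero_mul]]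
    refine sum_congr rfl fun j hj => sum_congr rfl fun β hβ => ?_
    obtain ⟨rfl, -⟩ := mem_piAntidiag.1 hβ
    exact sqrt_multinomial_mul_prod_div_sqrt_eq_kostlanCoeffRatio_mul (Nat.lt_succ_iff.1 (mem_range.1 hj)) _ u
  simp only [hXd', hXinf]
  refine tendsto_tsum_mul_of_tendsto_one ((hω i).of_nonneg_of_le (fun _ => norm_nonneg _)
    fun β => ?_) (fun d β => norm_kostlanCoeffRatio_le_one _ _)
    fun β => tendsto_kostlanCoeffRatio _
  rw [norm_mul]
  exact mul_le_of_le_one_right (norm_nonneg _) (hmonomial β)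

/-- **Almost sure pointwise convergence of the coupled rescaled Kostlan fields to the
Bargmann–Fock field.**
Let `γ_β ∼ N(0, 1_k)` be i.i.d. standard Gaussian vectors (all coordinates `γ_β^i`
independent standard Gaussians), and set
`X̃_d(u) = ∑_{|β| ≤ d} binom(d,β)^{1/2} γ_β (u/√d)^β` and
`X̃_∞(u) = ∑_β (1/β!)^{1/2} γ_β u^β`, where
`binom(d,β) = d!/(β₁!⋯β_m!(d−|β|)!)`.
Then for every fixed `u` with `‖u‖ ≤ 1`, `X̃_d(u) → X̃_∞(u)` almost surely. -/
theorem stmt_19 {m k : ℕ} {Ω : Type*} [MeasureSpace Ω]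
    [IsProbabilityMeasure (volume : Measure Ω)]
    (γ : (Fin m → ℕ) → Ω → Fin k → ℝ)
    (hmeas : ∀ β i, Measurable fun ω => γ β ω i)
    (hgauss : ∀ β i, Measure.map (fun ω => γ β ω i) volume = gaussianReal 0 1)
    (hindep : iIndepFun
      (fun (p : (Fin m → ℕ) × Fin k) ω => γ p.1 ω p.2) volume)
    (Xd : ℕ → (Fin m → ℝ) → Ω → Fin k → ℝ)
    (hXd : ∀ d u ω i, Xd d u ω i =
      ∑ j ∈ Finset.range (d + 1),
        ∑ β ∈ Finset.piAntidiag (Finset.univ : Finset (Fin m)) j,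
          Real.sqrt ((d.factorial : ℝ) /
              ((∏ l, ((β l).factorial : ℝ)) * ((d - j).factorial : ℝ))) *
            γ β ω i * ∏ l, (u l / Real.sqrt d) ^ β l)
    (Xinf : (Fin m → ℝ) → Ω → Fin k → ℝ)
    (hXinf : ∀ u ω i, Xinf u ω i =
      ∑' β : Fin m → ℕ,
        Real.sqrt (1 / ∏ l, ((β l).factorial : ℝ)) * γ β ω i * ∏ l, u l ^ β l)
    (u : Fin m → ℝ) (hu : ‖u‖ ≤ 1) :
    ∀ᵐ ω ∂(volume : Measure Ω),
      Tendsto (fun d => Xd d u ω) atTop (nhds (Xinf u ω)) :=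
  stmt_19_general γ hmeas hgauss Xd hXd Xinf hXinf u hu
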